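/- Fix n ≥ 2, a bit vector x ∈ {0,1}^n, and j ∈ {1,…,n}. Consider the family consisting of B = [(2j − 1/2)/n² − 1, (2j − 1/2)/n²] together with A_i = [(2i − x_i)/n², (2i − x_i)/n² + 1] for all i ≤ j. If x_j = 1, then every two members of this family intersect, so the maximum independent set has size 1; if x_j = 0, then B and A_j are disjoint, so the maximum independent set has size at least 2. -/

import Mathlib

/-!
For `x j = 1` the point `c = (2j - 1/2)/n²`, the right endpoint of `B`, lies in every member of
the family: the left endpoint of `A i` has numerator `2i - x i ≤ 2j - 1`, and `c ≤ 1` keeps `c`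
below every right endpoint, all of which are at least `1`. A family with a common point has no
two disjoint members. For `x j = 0` the left endpoint `2j/n²` of `A j` lies strictly to the right
of `c`, so `{B, A j}` is independent.
-/

theorem card_le_one_of_pairwise_disjoint_of_mem {ι α : Type*} {f : ι → Set α} {S : Finset ι}
    {p : α} (hp : ∀ i ∈ S, p ∈ f i)
    (hS : ∀ a ∈ S, ∀ b ∈ S, a ≠ b → Disjoint (f a) (f b)) : S.card ≤ 1 :=
  Finset.card_le_one.2 fun a ha b hb => by_contra fun hab =>
    Set.disjoint_left.1 (hS a ha b hb hab) (hp a ha) (hp b hb)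

theorem Icc_disjoint_Icc_of_lt {α : Type*} [Preorder α] {a b c d : α} (h : b < c) :
    Disjoint (Set.Icc a b) (Set.Icc c d) :=
  (Set.Iic_disjoint_Ici.2 h.not_ge).mono Set.Icc_subset_Iic_self Set.Icc_subset_Ici_self

theorem two_mul_sub_le_two_mul_sub_half {x : ℕ → ℝ} (hx : ∀ i, 0 ≤ x i) {i j : ℕ}
    (hxj : x j = 1) (hij : i ≤ j) : 2 * (i : ℝ) - x i ≤ 2 * j - 1 / 2 := by
  rcases hij.lt_or_eq with hlt | rfl
  · have : (i : ℝ) + 1 ≤ j := by exact_mod_cast hlt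
    linarith [hx i]
  · linarith

theorem two_mul_sub_half_div_sq_le_one {n j : ℕ} (hn : 2 ≤ n) (hjn : j ≤ n) :
    (2 * (j : ℝ) - 1 / 2) / (n : ℝ) ^ 2 ≤ 1 := by
  have hn' : (2 : ℝ) ≤ n := by exact_mod_cast hn
  have hjn' : (j : ℝ) ≤ n := by exact_mod_cast hjn
  exact div_le_one_of_le₀ (by nlinarith) (sq_nonneg _)

/-- In the augmented-indexing reduction, consider the family consisting of Bob's probe
interval `B` (index `0`) and Alice's intervals `A i` for `1 ≤ i ≤ j`. If `x j = 1` every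
independent subfamily has at most one member; if `x j = 0` there is an independent
subfamily of size at least `2`. -/
theorem probe_family_independence (n : ℕ) (hn : 2 ≤ n) (x : ℕ → ℝ)
    (hx : ∀ i, x i = 0 ∨ x i = 1) (j : ℕ) (hj : j ∈ Finset.Icc 1 n)
    (A : ℕ → Set ℝ)
    (hA : ∀ i, A i = Set.Icc ((2 * i - x i) / (n : ℝ) ^ 2)
      ((2 * i - x i) / (n : ℝ) ^ 2 + 1))
    (B : Set ℝ)
    (hB : B = Set.Icc ((2 * j - 1/2) / (n : ℝ) ^ 2 - 1) ((2 * j - 1/2) / (n : ℝ) ^ 2))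
    (I : ℕ → Set ℝ) (hI : I 0 = B ∧ ∀ i, 1 ≤ i → I i = A i) :
    (x j = 1 → ∀ S ⊆ insert 0 (Finset.Icc 1 j),
      (∀ a ∈ S, ∀ b ∈ S, a ≠ b → Disjoint (I a) (I b)) → S.card ≤ 1) ∧
    (x j = 0 → ∃ S ⊆ insert 0 (Finset.Icc 1 j),
      (∀ a ∈ S, ∀ b ∈ S, a ≠ b → Disjoint (I a) (I b)) ∧ 2 ≤ S.card) := by
  obtain ⟨hI0, hIA⟩ := hI
  obtain ⟨hj1, hjn⟩ := Finset.mem_Icc.1 hj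
  have hx0 : ∀ i, 0 ≤ x i := fun i => by rcases hx i with h | h <;> simp [h]
  have hx1 : ∀ i, x i ≤ 1 := fun i => by rcases hx i with h | h <;> simp [h]
  constructor
  · intro hxj S hS hdisj
    refine card_le_one_of_pairwise_disjoint_of_mem
      (p := (2 * (j : ℝ) - 1 / 2) / (n : ℝ) ^ 2) (fun i hi => ?_) hdisj
    rcases Finset.mem_insert.1 (hS hi) with rfl | hi
    · rw [hI0, hB]
      exact ⟨sub_le_self _ zero_le_one, le_rfl⟩
    · obtain ⟨hi1, hij⟩ := Finset.mem_Icc.1 hi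
      have hi1' : (1 : ℝ) ≤ i := by exact_mod_cast hi1
      rw [hIA i hi1, hA i]
      exact ⟨div_le_div_of_nonneg_right (two_mul_sub_le_two_mul_sub_half hx0 hxj hij)
          (sq_nonneg _),
        (two_mul_sub_half_div_sq_le_one hn hjn).trans
          (le_add_of_nonneg_left (div_nonneg (by linarith [hx1 i]) (sq_nonneg _)))⟩
  · intro hxj
    have hBA : Disjoint (I 0) (I j) := by
      rw [hI0, hB, hIA j hj1, hA j, hxj]
      exact Icc_disjoint_Icc_of_lt
        (div_lt_div_of_pos_right (by linarith) (by positivity))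
    refine ⟨{0, j}, Finset.insert_subset_insert _ (by simpa using hj1), ?_, ?_⟩
    · show (({0, j} : Finset ℕ) : Set ℕ).Pairwise fun a b => Disjoint (I a) (I b)
      rw [Finset.coe_pair, Set.pairwise_pair]
      exact fun _ => ⟨hBA, hBA.symm⟩
    · rw [Finset.card_pair (by omega)]
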